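/- Let A be a simple monotone well-founded ordered (F ∪ F#)-algebra such that f#_A = f_A for all f ∈ F, and let ≿ be a precedence on F. Then the generalized weighted path order >_gwpo induced by A and ≿ coincides with the weighted path order >_wpo induced by the restriction of A to F and ≿. -/
import Mathlib


/-- First-order terms over a signature `F` with arity function `ar` and variables `V`. -/
inductive Term (F : Type) (ar : F → ℕ) (V : Type) : Type where
  | var : V → Term F ar V
  | app : (f : F) → (Fin (ar f) → Term F ar V) → Term F ar V

namespace Term

variable {F V : Type} {ar : F → ℕ}

/-- Application of a substitution `σ : V → Term F ar V` to a term. -/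
def subst (σ : V → Term F ar V) : Term F ar V → Term F ar V
  | var v => σ v
  | app f args => app f (fun i => (args i).subst σ)

/-- Interpretation of a term in an `F`-algebra with carrier `A` under assignment `α`. -/
def eval {A : Type} (I : (f : F) → (Fin (ar f) → A) → A) (α : V → A) :
    Term F ar V → A
  | var v => α v
  | app f args => I f (fun i => (args i).eval I α)

/-- A term is a non-variable term (function application). -/
def IsApp : Term F ar V → Prop
  | var _ => False
  | app _ _ => True

end Term

section Algebra

variable {F V A : Type}

/-- `RC lt a b` : reflexive closure of the strict order `lt`, i.e. `a ≤ b`. -/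
def RC (lt : A → A → Prop) (a b : A) : Prop := lt a b ∨ a = b

variable (ar : F → ℕ) (I : (f : F) → (Fin (ar f) → A) → A) (lt : A → A → Prop)

/-- `s >_A t` : `[α](t) < [α](s)` for every assignment `α`. -/
def GTA (s t : Term F ar V) : Prop := ∀ α : V → A, lt (t.eval I α) (s.eval I α)

/-- `s ≥_A t` : `[α](t) ≤ [α](s)` for every assignment `α`. -/
def GEA (s t : Term F ar V) : Prop := ∀ α : V → A, RC lt (t.eval I α) (s.eval I α)

/-- The algebra is simple: `f_A(a_1, …, a_n) ≥ a_i`. -/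
def Simple : Prop := ∀ (f : F) (as : Fin (ar f) → A) (i : Fin (ar f)), RC lt (as i) (I f as)

/-- The algebra is weakly monotone: `a_i > b` implies
`f_A(a_1,…,a_i,…,a_n) ≥ f_A(a_1,…,b,…,a_n)`. -/
def WeaklyMonotone : Prop :=
  ∀ (f : F) (as : Fin (ar f) → A) (i : Fin (ar f)) (b : A),
    lt b (as i) → RC lt (I f (Function.update as i b)) (I f as)

end Algebra

section WPO

variable {F V A : Type} (ar : F → ℕ) (I : (f : F) → (Fin (ar f) → A) → A)
  (lt : A → A → Prop) (prec : F → F → Prop)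

mutual
  /-- The weighted path order induced by the algebra `(A, I, lt)` and the precedence `prec`. -/
  inductive WPO : Term F ar V → Term F ar V → Prop where
    /-- (1) `s >_A t`. -/
    | alg {s t} : GTA ar I lt s t → WPO s t
    /-- (2a) `s ≥_A t` and `s_i >_wpo t`. -/
    | sub {f ss t} (i : Fin (ar f)) :
        GEA ar I lt (Term.app f ss) t → WPO (ss i) t → WPO (Term.app f ss) t
    /-- (2a) `s ≥_A t` and `s_i = t`. -/
    | subEq {f ss t} (i : Fin (ar f)) :
        GEA ar I lt (Term.app f ss) t → ss i = t → WPO (Term.app f ss) t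
    /-- (2b-i) `s ≥_A t`, `s >_wpo t_j` for all `j`, and `f ≻ g`. -/
    | prc {f ss g ts} :
        GEA ar I lt (Term.app f ss) (Term.app g ts) →
        (∀ j, WPO (Term.app f ss) (ts j)) →
        prec f g → ¬ prec g f → WPO (Term.app f ss) (Term.app g ts)
    /-- (2b-ii) `s ≥_A t`, `s >_wpo t_j` for all `j`, `f ≿ g` and lex comparison of arguments. -/
    | lex {f ss g ts} :
        GEA ar I lt (Term.app f ss) (Term.app g ts) →
        (∀ j, WPO (Term.app f ss) (ts j)) →
        prec f g → WPOLex (List.ofFn ss) (List.ofFn ts) →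
        WPO (Term.app f ss) (Term.app g ts)

  /-- Lexicographic extension of `WPO` to argument lists (of possibly different lengths). -/
  inductive WPOLex : List (Term F ar V) → List (Term F ar V) → Prop where
    | head {s t l₁ l₂} : WPO s t → WPOLex (s :: l₁) (t :: l₂)
    | tail {s l₁ l₂} : WPOLex l₁ l₂ → WPOLex (s :: l₁) (s :: l₂)
    | longer {s l₁} : WPOLex (s :: l₁) []
end

end WPO

section SPO

variable {F V : Type} {ar : F → ℕ} (qge qgt : Term F ar V → Term F ar V → Prop)

mutual
  /-- The semantic path order induced by the order pair `(qge, qgt)` (`⊒∼`, `⊐`). -/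
  inductive SPO : Term F ar V → Term F ar V → Prop where
    /-- (1) `s_i >_spo t`. -/
    | sub {f ss t} (i : Fin (ar f)) : SPO (ss i) t → SPO (Term.app f ss) t
    /-- (1) `s_i = t`. -/
    | subEq {f ss t} (i : Fin (ar f)) : ss i = t → SPO (Term.app f ss) t
    /-- (2a) `s >_spo t_j` for all `j` and `s ⊐ t`. -/
    | gt {f ss g ts} : (∀ j, SPO (Term.app f ss) (ts j)) →
        qgt (Term.app f ss) (Term.app g ts) → SPO (Term.app f ss) (Term.app g ts)
    /-- (2b) `s >_spo t_j` for all `j`, `s ⊒∼ t` and lex comparison of arguments. -/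
    | lex {f ss g ts} : (∀ j, SPO (Term.app f ss) (ts j)) →
        qge (Term.app f ss) (Term.app g ts) →
        SPOLex (List.ofFn ss) (List.ofFn ts) → SPO (Term.app f ss) (Term.app g ts)

  /-- Lexicographic extension of `SPO` to argument lists. -/
  inductive SPOLex : List (Term F ar V) → List (Term F ar V) → Prop where
    | head {s t l₁ l₂} : SPO s t → SPOLex (s :: l₁) (t :: l₂)
    | tail {s l₁ l₂} : SPOLex l₁ l₂ → SPOLex (s :: l₁) (s :: l₂)
    | longer {s l₁} : SPOLex (s :: l₁) []
end

end SPO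

section Props

variable {F V : Type} {ar : F → ℕ}

/-- Closure under contexts: replacing one argument. -/
def ClosedCtx (R : Term F ar V → Term F ar V → Prop) : Prop :=
  ∀ (f : F) (args : Fin (ar f) → Term F ar V) (i : Fin (ar f)) (s t : Term F ar V),
    R s t → R (Term.app f (Function.update args i s)) (Term.app f (Function.update args i t))

/-- Closure under substitutions. -/
def ClosedSubst (R : Term F ar V → Term F ar V → Prop) : Prop :=
  ∀ (σ : V → Term F ar V) (s t : Term F ar V), R s t → R (s.subst σ) (t.subst σ)

/-- A reduction order: a well-founded strict order closed under contexts and substitutions. -/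
def ReductionOrder (R : Term F ar V → Term F ar V → Prop) : Prop :=
  (∀ s, ¬ R s s) ∧ Transitive R ∧ WellFounded (fun s t => R t s) ∧
    ClosedCtx R ∧ ClosedSubst R

/-- `Subterm t s` : `t` is a subterm of `s`. -/
inductive Subterm : Term F ar V → Term F ar V → Prop where
  | refl {t} : Subterm t t
  | arg {t f ss} (i : Fin (ar f)) : Subterm t (ss i) → Subterm t (Term.app f ss)

/-- `ProperSubterm t s` : `t` is a proper subterm of `s`. -/
def ProperSubterm (t s : Term F ar V) : Prop :=
  ∃ (f : F) (ss : Fin (ar f) → Term F ar V) (i : Fin (ar f)),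
    s = Term.app f ss ∧ Subterm t (ss i)

/-- The rewrite relation of a TRS `R`: closure of the rules under substitutions and contexts. -/
inductive Rewrite (R : Set (Term F ar V × Term F ar V)) : Term F ar V → Term F ar V → Prop where
  | rule {l r} (σ : V → Term F ar V) : (l, r) ∈ R → Rewrite R (l.subst σ) (r.subst σ)
  | ctx {s t} (f : F) (args : Fin (ar f) → Term F ar V) (i : Fin (ar f)) :
      Rewrite R s t →
      Rewrite R (Term.app f (Function.update args i s)) (Term.app f (Function.update args i t))

end Props

section Pair

variable {F V A : Type} (ar : F → ℕ) (I : (f : F) → (Fin (ar f) → A) → A)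
  (lt : A → A → Prop) (prec : F → F → Prop)

/-- `s ⊒∼ t` : both non-variable, and `s >_A t`, or `s ≥_A t` and `root(s) ≿ root(t)`. -/
def QGE (s t : Term F ar V) : Prop :=
  ∃ (f : F) (ss : Fin (ar f) → Term F ar V) (g : F) (ts : Fin (ar g) → Term F ar V),
    s = Term.app f ss ∧ t = Term.app g ts ∧
      (GTA ar I lt s t ∨ (GEA ar I lt s t ∧ prec f g))

/-- `s ⊐ t` : both non-variable, and `s >_A t`, or `s ≥_A t` and `root(s) ≻ root(t)`. -/
def QGT (s t : Term F ar V) : Prop :=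
  ∃ (f : F) (ss : Fin (ar f) → Term F ar V) (g : F) (ts : Fin (ar g) → Term F ar V),
    s = Term.app f ss ∧ t = Term.app g ts ∧
      (GTA ar I lt s t ∨ (GEA ar I lt s t ∧ prec f g ∧ ¬ prec g f))

variable (Im : (f : F) → (Fin (ar f) → A) → A)

/-- Interpretation of the marked term `t♯` (root symbol interpreted by `Im`). -/
def evalSharp (α : V → A) : Term F ar V → A
  | .var v => α v
  | .app f ts => Im f (fun i => (ts i).eval I α)

/-- `s♯ >_A t♯`. -/
def GTAS (s t : Term F ar V) : Prop :=
  ∀ α : V → A, lt (evalSharp ar I Im α t) (evalSharp ar I Im α s)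

/-- `s♯ ≥_A t♯`. -/
def GEAS (s t : Term F ar V) : Prop :=
  ∀ α : V → A, RC lt (evalSharp ar I Im α t) (evalSharp ar I Im α s)

/-- Marked version of `⊒∼` : `s♯ >_A t♯`, or `s♯ ≥_A t♯` and `root(s) ≿ root(t)`. -/
def QGES (s t : Term F ar V) : Prop :=
  ∃ (f : F) (ss : Fin (ar f) → Term F ar V) (g : F) (ts : Fin (ar g) → Term F ar V),
    s = Term.app f ss ∧ t = Term.app g ts ∧
      (GTAS ar I lt Im s t ∨ (GEAS ar I lt Im s t ∧ prec f g))

/-- Marked version of `⊐` : `s♯ >_A t♯`, or `s♯ ≥_A t♯` and `root(s) ≻ root(t)`. -/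
def QGTS (s t : Term F ar V) : Prop :=
  ∃ (f : F) (ss : Fin (ar f) → Term F ar V) (g : F) (ts : Fin (ar g) → Term F ar V),
    s = Term.app f ss ∧ t = Term.app g ts ∧
      (GTAS ar I lt Im s t ∨ (GEAS ar I lt Im s t ∧ prec f g ∧ ¬ prec g f))

/-- The generalized weighted path order: `s ≥_A t` and `s >_spo t` for the SPO induced
from the marked order pair. -/
def GWPO (s t : Term F ar V) : Prop :=
  GEA ar I lt s t ∧ SPO (QGES ar I lt prec Im) (QGTS ar I lt prec Im) s t

end Pair

section Aux

variable {F V A : Type} {ar : F → ℕ} {I Im : (f : F) → (Fin (ar f) → A) → A}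
  {lt : A → A → Prop} {prec : F → F → Prop}

lemma rc_trans' (lt_trans : Transitive lt) {a b c : A} (h1 : RC lt a b) (h2 : RC lt b c) :
    RC lt a c := by
  rcases h1 with h1 | rfl
  · rcases h2 with h2 | rfl
    · exact Or.inl (lt_trans h1 h2)
    · exact Or.inl h1
  · exact h2

lemma rc_lt' (lt_trans : Transitive lt) {a b c : A} (h1 : RC lt a b) (h2 : lt b c) :
    lt a c := by
  rcases h1 with h1 | rfl
  · exact lt_trans h1 h2
  · exact h2

lemma lt_rc' (lt_trans : Transitive lt) {a b c : A} (h1 : lt a b) (h2 : RC lt b c) :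
    lt a c := by
  rcases h2 with h2 | rfl
  · exact lt_trans h1 h2
  · exact h1

lemma evalSharp_eq (hIm : ∀ (f : F) (as : Fin (ar f) → A), Im f as = I f as)
    (α : V → A) : ∀ t : Term F ar V, evalSharp ar I Im α t = t.eval I α
  | .var v => rfl
  | .app f ts => hIm f _

lemma gea_arg (hsimple : Simple ar I lt) (f : F) (ss : Fin (ar f) → Term F ar V)
    (i : Fin (ar f)) : GEA (V := V) ar I lt (Term.app f ss) (ss i) :=
  fun α => hsimple f (fun j => (ss j).eval I α) i

/-- `x` occurs in `t`. -/
def Occurs (x : V) : Term F ar V → Prop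
  | .var v => x = v
  | .app _ ts => ∃ i, Occurs x (ts i)

lemma eval_update_of_not_occurs [DecidableEq V] {x : V} {b : A} {α : V → A} :
    ∀ t : Term F ar V, ¬ Occurs x t →
      t.eval I (Function.update α x b) = t.eval I α := by
  classical
  intro t
  induction t with
  | var v =>
    intro h
    simp only [Term.eval]
    exact Function.update_of_ne (fun hv => h hv.symm) b α
  | app f ts ih =>
    intro h
    simp only [Term.eval]
    congr 1
    funext i
    exact ih i (fun hi => h ⟨i, hi⟩)

lemma rc_of_occurs (lt_trans : Transitive lt) (hsimple : Simple ar I lt) {x : V} :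
    ∀ t : Term F ar V, Occurs x t → ∀ α : V → A, RC lt (α x) (t.eval I α) := by
  classical
  intro t
  induction t with
  | var v => rintro rfl α; exact Or.inr rfl
  | app f ts ih =>
    rintro ⟨i, hi⟩ α
    exact rc_trans' lt_trans (ih i hi α) (hsimple f (fun j => (ts j).eval I α) i)

lemma gta_var_false [Nonempty A] (lt_irrefl : ∀ a, ¬ lt a a) (lt_trans : Transitive lt)
    (hsimple : Simple ar I lt) {x : V} {t : Term F ar V}
    (h : GTA ar I lt (Term.var x) t) : False := by
  classical
  by_cases hocc : Occurs x t
  · have α : V → A := fun _ => Classical.arbitrary A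
    have h1 := h α
    have h2 := rc_of_occurs lt_trans hsimple t hocc α
    exact lt_irrefl _ (rc_lt' lt_trans h2 h1)
  · have α₀ : V → A := fun _ => Classical.arbitrary A
    set α := Function.update α₀ x (t.eval I α₀) with hα
    have h1 := h α
    have h2 : t.eval I α = t.eval I α₀ := eval_update_of_not_occurs t hocc
    have h3 : Term.eval I α (Term.var x) = t.eval I α₀ := by
      simp [Term.eval, hα]
    rw [h2, h3] at h1
    exact lt_irrefl _ h1

lemma spo_of_occurs {qge qgt : Term F ar V → Term F ar V → Prop} {v : V} :
    ∀ t : Term F ar V, Occurs v t → t = Term.var v ∨ SPO qge qgt t (Term.var v) := by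
  classical
  intro t
  induction t with
  | var w => rintro rfl; exact Or.inl rfl
  | app f ts ih =>
    rintro ⟨i, hi⟩
    rcases ih i hi with he | hspo
    · exact Or.inr (SPO.subEq i he)
    · exact Or.inr (SPO.sub i hspo)

lemma gta_spo [Nonempty A] (lt_irrefl : ∀ a, ¬ lt a a) (lt_trans : Transitive lt)
    (hsimple : Simple ar I lt)
    (hIm : ∀ (f : F) (as : Fin (ar f) → A), Im f as = I f as) :
    ∀ (t : Term F ar V) (f : F) (ss : Fin (ar f) → Term F ar V),
      GTA ar I lt (Term.app f ss) t →
      SPO (QGES ar I lt prec Im) (QGTS ar I lt prec Im) (Term.app f ss) t := by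
  classical
  intro t
  induction t with
  | var v =>
    intro f ss h
    by_cases hocc : Occurs v (Term.app f ss)
    · rcases spo_of_occurs (qge := QGES ar I lt prec Im) (qgt := QGTS ar I lt prec Im)
        (Term.app f ss) hocc with he | hspo
      · exact absurd he (by simp)
      · exact hspo
    · exfalso
      have α₀ : V → A := fun _ => Classical.arbitrary A
      set s := Term.app f ss with hs
      set α := Function.update α₀ v (s.eval I α₀) with hα
      have h1 := h α
      have h2 : s.eval I α = s.eval I α₀ := eval_update_of_not_occurs s hocc
      have h3 : Term.eval I α (Term.var v) = s.eval I α₀ := by simp [Term.eval, hα]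
      rw [h2, h3] at h1
      exact lt_irrefl _ h1
  | app g ts ih =>
    intro f ss h
    refine SPO.gt (fun j => ih j f ss fun α => ?_) ?_
    · exact rc_lt' lt_trans (hsimple g (fun k => (ts k).eval I α) j) (h α)
    · refine ⟨f, ss, g, ts, rfl, rfl, Or.inl fun α => ?_⟩
      rw [evalSharp_eq hIm, evalSharp_eq hIm]
      exact h α

end Aux

section Main

variable {F V A : Type} {ar : F → ℕ} {I Im : (f : F) → (Fin (ar f) → A) → A}
  {lt : A → A → Prop} {prec : F → F → Prop}

lemma spo_to_wpo (lt_trans : Transitive lt) (hsimple : Simple ar I lt)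
    (hIm : ∀ (f : F) (as : Fin (ar f) → A), Im f as = I f as) :
    ∀ {s t : Term F ar V}, SPO (QGES ar I lt prec Im) (QGTS ar I lt prec Im) s t →
      GEA ar I lt s t ∧ WPO ar I lt prec s t := by
  intro s t h
  refine SPO.rec
    (motive_1 := fun s t _ => GEA ar I lt s t ∧ WPO ar I lt prec s t)
    (motive_2 := fun l₁ l₂ _ => WPOLex ar I lt prec l₁ l₂)
    ?_ ?_ ?_ ?_ ?_ ?_ ?_ h
  · -- sub
    intro f ss t i h ih
    have hge : GEA ar I lt (Term.app f ss) t :=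
      fun α => rc_trans' lt_trans (ih.1 α) (hsimple f (fun j => Term.eval I α (ss j)) i)
    exact ⟨hge, WPO.sub i hge ih.2⟩
  · -- subEq
    intro f ss t i he
    subst he
    have hge : GEA ar I lt (Term.app f ss) (ss i) :=
      fun α => hsimple f (fun j => Term.eval I α (ss j)) i
    exact ⟨hge, WPO.subEq i hge rfl⟩
  · -- gt
    intro f ss g ts h hqgt ih
    obtain ⟨f', ss', g', ts', hs, ht, hor⟩ := hqgt
    injection hs with hf hss
    injection ht with hg hts
    subst hf; subst hg
    have hss' := eq_of_heq hss; have hts' := eq_of_heq hts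
    subst hss'; subst hts'
    rcases hor with hgt | ⟨hge, hp, hnp⟩
    · have hgta : GTA ar I lt (Term.app f ss) (Term.app g ts) := fun α => by
        have := hgt α
        rwa [evalSharp_eq hIm, evalSharp_eq hIm] at this
      exact ⟨fun α => Or.inl (hgta α), WPO.alg hgta⟩
    · have hgea : GEA ar I lt (Term.app f ss) (Term.app g ts) := fun α => by
        have := hge α
        rwa [evalSharp_eq hIm, evalSharp_eq hIm] at this
      exact ⟨hgea, WPO.prc hgea (fun j => (ih j).2) hp hnp⟩
  · -- lex
    intro f ss g ts h hqge hlex ih ihlex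
    obtain ⟨f', ss', g', ts', hs, ht, hor⟩ := hqge
    injection hs with hf hss
    injection ht with hg hts
    subst hf; subst hg
    have hss' := eq_of_heq hss; have hts' := eq_of_heq hts
    subst hss'; subst hts'
    rcases hor with hgt | ⟨hge, hp⟩
    · have hgta : GTA ar I lt (Term.app f ss) (Term.app g ts) := fun α => by
        have := hgt α
        rwa [evalSharp_eq hIm, evalSharp_eq hIm] at this
      exact ⟨fun α => Or.inl (hgta α), WPO.alg hgta⟩
    · have hgea : GEA ar I lt (Term.app f ss) (Term.app g ts) := fun α => by
        have := hge α
        rwa [evalSharp_eq hIm, evalSharp_eq hIm] at this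
      exact ⟨hgea, WPO.lex hgea (fun j => (ih j).2) hp ihlex⟩
  · intro s t l₁ l₂ h ih; exact WPOLex.head ih.2
  · intro s l₁ l₂ h ih; exact WPOLex.tail ih
  · intro s l₁; exact WPOLex.longer

lemma wpo_to_spo [Nonempty A] (lt_irrefl : ∀ a, ¬ lt a a) (lt_trans : Transitive lt)
    (hsimple : Simple ar I lt)
    (hIm : ∀ (f : F) (as : Fin (ar f) → A), Im f as = I f as) :
    ∀ {s t : Term F ar V}, WPO ar I lt prec s t →
      GEA ar I lt s t ∧ SPO (QGES ar I lt prec Im) (QGTS ar I lt prec Im) s t := by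
  intro s t h
  refine WPO.rec
    (motive_1 := fun s t _ => GEA ar I lt s t ∧
      SPO (QGES ar I lt prec Im) (QGTS ar I lt prec Im) s t)
    (motive_2 := fun l₁ l₂ _ => SPOLex (QGES ar I lt prec Im) (QGTS ar I lt prec Im) l₁ l₂)
    ?_ ?_ ?_ ?_ ?_ ?_ ?_ ?_ h
  · -- alg
    intro s t hgta
    refine ⟨fun α => Or.inl (hgta α), ?_⟩
    match s, hgta with
    | .var x, hgta => exact absurd hgta (fun h => gta_var_false lt_irrefl lt_trans hsimple h)
    | .app f ss, hgta => exact gta_spo lt_irrefl lt_trans hsimple hIm t f ss hgta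
  · intro f ss t i hge hw ih; exact ⟨hge, SPO.sub i ih.2⟩
  · intro f ss t i hge he; exact ⟨hge, SPO.subEq i he⟩
  · -- prc
    intro f ss g ts hge hts hp hnp ih
    refine ⟨hge, SPO.gt (fun j => (ih j).2) ⟨f, ss, g, ts, rfl, rfl, Or.inr ⟨?_, hp, hnp⟩⟩⟩
    intro α
    rw [evalSharp_eq hIm, evalSharp_eq hIm]
    exact hge α
  · -- lex
    intro f ss g ts hge hts hp hlex ih ihlex
    refine ⟨hge, SPO.lex (fun j => (ih j).2) ⟨f, ss, g, ts, rfl, rfl, Or.inr ⟨?_, hp⟩⟩ ihlex⟩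
    intro α
    rw [evalSharp_eq hIm, evalSharp_eq hIm]
    exact hge α
  · intro s t l₁ l₂ h ih; exact SPOLex.head ih.2
  · intro s l₁ l₂ h ih; exact SPOLex.tail ih
  · intro s l₁; exact SPOLex.longer

end Main

/-- For a simple monotone well-founded ordered `(F ∪ F♯)`-algebra with
`f♯_A = f_A` for all `f ∈ F`, and any precedence on `F`, the generalized weighted path
order coincides with the weighted path order induced by the restriction to `F`. -/
theorem gwpo_eq_wpo_of_simple
    {F V A : Type} [Fintype F] [Countable V] [Infinite V] [Nonempty A]
    (ar : F → ℕ) (I Im : (f : F) → (Fin (ar f) → A) → A) (lt : A → A → Prop)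
    (lt_irrefl : ∀ a, ¬ lt a a) (lt_trans : Transitive lt)
    (lt_wf : WellFounded lt)
    (hsimple : Simple ar I lt) (hmono : WeaklyMonotone ar I lt)
    (hIm : ∀ (f : F) (as : Fin (ar f) → A), Im f as = I f as)
    (prec : F → F → Prop) (prec_refl : ∀ f, prec f f)
    (prec_trans : ∀ f g h, prec f g → prec g h → prec f h) :
    ∀ s t : Term F ar V, GWPO ar I lt prec Im s t ↔ WPO ar I lt prec s t := by
  intro s t
  constructor
  · intro ⟨_, hspo⟩
    exact (spo_to_wpo lt_trans hsimple hIm hspo).2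
  · intro hwpo
    have h := wpo_to_spo lt_irrefl lt_trans hsimple hIm (prec := prec) hwpo
    exact ⟨h.1, h.2⟩
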